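/- arXiv:1703.06599 — 7 statements merged into one kernel-verified Lean document; each statement's English description precedes it below -/
import Mathlib

section
/- Let q : [0,h] → ℝ^n be an exact solution of a second-order ODE q'' = f(q, q', t) of class C^{r+2}, with q(0) = q₀, q(h) = q₁, and v₀ = q'(0). Suppose ṽ₀ satisfies the inverse problem q₁ = q₀ + h·ṽ₀ + Σ_{k=2}^{r+1} (h^k/k!)·q^{(k)}(q₀, ṽ₀), where q^{(k)}(q₀, ṽ₀) denotes the k-th time derivative determined by prolonging the vector field at initial data (q₀, ṽ₀). If each prolonged derivative f^{(k-1)} is Lipschitz in the velocity argument, then there exists C > 0 and h₀ > 0 such that ‖ṽ₀ − v₀‖ ≤ C·h^{r+1} for all 0 < h < h₀. -/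
/-!
For small `h`, the map `v ↦ h v + ∑_{k=2}^{r+1} (h^k/k!) q^{(k)}(q₀, v)` is `h` times a
perturbation of the identity by an `O(h)`-Lipschitz map, hence it expands distances by at least
`h/2`. It sends `ṽ₀` exactly to `q₁ - q₀`, and `v₀` to `q₁ - q₀` up to the Taylor remainder
`O(h^{r+2})` of `q`, so `‖ṽ₀ - v₀‖ ≤ (2/h) O(h^{r+2}) = O(h^{r+1})`.
-/

open Finset Filter

open scoped Nat NNReal

theorem exists_lipschitzWith_of_finset {α β ι : Type*} [PseudoEMetricSpace α]
    [PseudoEMetricSpace β] {g : ι → α → β} (s : Finset ι)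
    (hg : ∀ i ∈ s, ∃ K, LipschitzWith K (g i)) : ∃ K, ∀ i ∈ s, LipschitzWith K (g i) :=
  ((eventually_all_finset s).2 fun i hi ↦
    let ⟨K, hK⟩ := hg i hi
    eventually_atTop.2 ⟨K, fun _ hK' ↦ hK.weaken hK'⟩).exists

theorem exists_norm_sub_sum_iteratedDeriv_le {E : Type*} [NormedAddCommGroup E]
    [NormedSpace ℝ E] {f : ℝ → E} {m : ℕ} (hf : ContDiff ℝ (m + 1 : ℕ) f) {a b : ℝ}
    (hab : a < b) :
    ∃ C, ∀ x ∈ Set.Icc a b,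
      ‖f x - ∑ k ∈ range (m + 1), ((x - a) ^ k / k !) • iteratedDeriv k f a‖
        ≤ C * (x - a) ^ (m + 1) := by
  obtain ⟨C, hC⟩ := exists_taylor_mean_remainder_bound hab.le (by exact_mod_cast hf.contDiffOn)
  refine ⟨C, fun x hx ↦ ?_⟩
  convert hC x hx using 3
  rw [taylor_within_apply]
  refine sum_congr rfl fun k hk ↦ ?_
  have hk : k ≤ m + 1 := by rw [mem_range] at hk; omega
  rw [iteratedDerivWithin_eq_iteratedDeriv (uniqueDiffOn_Icc hab)
    (hf.of_le (by exact_mod_cast hk)).contDiffAt (Set.left_mem_Icc.2 hab.le), div_eq_inv_mul]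

section TaylorIncrement

variable {E : Type*} [NormedAddCommGroup E] [NormedSpace ℝ E]

/-- `q₀ + taylorIncrement g r h v` is the degree-`(r+1)` Taylor polynomial at time `h` of the
motion with initial data `(q₀, v)`, when `g k v` is its `k`-th derivative at time `0`. -/
noncomputable def taylorIncrement (g : ℕ → E → E) (r : ℕ) (h : ℝ) (v : E) : E :=
  h • v + ∑ k ∈ Icc 2 (r + 1), (h ^ k / k !) • g k v

variable {g : ℕ → E → E} {r : ℕ} {K : ℝ≥0} {h : ℝ}

theorem norm_taylorIncrement_sub_sub_smul_le (hg : ∀ k ∈ Icc 2 (r + 1), LipschitzWith K (g k))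
    (h0 : 0 ≤ h) (h1 : h ≤ 1) (v w : E) :
    ‖taylorIncrement g r h v - taylorIncrement g r h w - h • (v - w)‖
      ≤ r * K * h ^ 2 * ‖v - w‖ := by
  have hterm : ∀ k ∈ Icc 2 (r + 1), ‖(h ^ k / k !) • (g k v - g k w)‖ ≤ K * h ^ 2 * ‖v - w‖ := by
    intro k hk
    rw [mem_Icc] at hk
    have hcoef : h ^ k / k ! ≤ h ^ 2 :=
      (div_le_self (by positivity) (by exact_mod_cast k.factorial_pos)).trans
        (pow_le_pow_of_le_one h0 h1 hk.1)
    rw [norm_smul, Real.norm_of_nonneg (by positivity)]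
    calc h ^ k / k ! * ‖g k v - g k w‖ ≤ h ^ 2 * (K * ‖v - w‖) := by
          gcongr
          exact (hg k (mem_Icc.2 hk)).norm_sub_le v w
      _ = K * h ^ 2 * ‖v - w‖ := by ring
  calc ‖taylorIncrement g r h v - taylorIncrement g r h w - h • (v - w)‖
      = ‖∑ k ∈ Icc 2 (r + 1), (h ^ k / k !) • (g k v - g k w)‖ := by
        simp only [taylorIncrement, smul_sub, sum_sub_distrib]
        abel_nf
    _ ≤ ∑ k ∈ Icc 2 (r + 1), K * h ^ 2 * ‖v - w‖ := norm_sum_le_of_le _ hterm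
    _ = r * K * h ^ 2 * ‖v - w‖ := by simp [Nat.card_Icc]; ring

theorem mul_norm_sub_le_two_mul_norm_taylorIncrement_sub
    (hg : ∀ k ∈ Icc 2 (r + 1), LipschitzWith K (g k)) (h0 : 0 ≤ h) (h1 : h ≤ 1)
    (hK : r * K * h ≤ 1 / 2) (v w : E) :
    h * ‖v - w‖ ≤ 2 * ‖taylorIncrement g r h v - taylorIncrement g r h w‖ := by
  have hsmul : ‖h • (v - w)‖ = h * ‖v - w‖ := by rw [norm_smul, Real.norm_of_nonneg h0]
  have htri := norm_le_norm_add_norm_sub' (h • (v - w))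
    (taylorIncrement g r h v - taylorIncrement g r h w)
  rw [hsmul, norm_sub_rev (h • (v - w))] at htri
  have hrem := norm_taylorIncrement_sub_sub_smul_le hg h0 h1 v w
  nlinarith [mul_le_mul_of_nonneg_right hK (mul_nonneg h0 (norm_nonneg (v - w)))]

end TaylorIncrement

theorem sum_range_iteratedDeriv_eq_add_taylorIncrement {E : Type*} [NormedAddCommGroup E]
    [NormedSpace ℝ E] {q : ℝ → E} {g : ℕ → E → E} {r : ℕ} {a : ℝ}
    (hg : ∀ k ∈ Icc 2 (r + 1), iteratedDeriv k q a = g k (deriv q a)) (h : ℝ) :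
    ∑ k ∈ range (r + 2), (h ^ k / k !) • iteratedDeriv k q a
      = q a + taylorIncrement g r h (deriv q a) := by
  rw [show r + 2 = r + 1 + 1 from rfl, ← sum_range_add_sum_Ico _ (by omega : 2 ≤ r + 1 + 1),
    Ico_add_one_right_eq_Icc, taylorIncrement,
    sum_congr rfl fun k (hk : k ∈ Icc 2 (r + 1)) ↦ by rw [hg k hk]]
  simp [sum_range_succ, add_assoc]

theorem velocity_approximation_general {n r : ℕ}
    (qk : ℕ → (Fin n → ℝ) → (Fin n → ℝ) → (Fin n → ℝ))
    (H : ℝ) (hH : 0 < H)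
    (q : ℝ → (Fin n → ℝ)) (hq : ContDiff ℝ (r + 2 : ℕ) q)
    -- qk k gives the k-th time derivative obtained by prolonging the vector field;
    -- it is consistent with the exact solution at the exact initial data (q 0, q' 0)
    (hprol : ∀ k, 2 ≤ k → k ≤ r + 2 → iteratedDeriv k q 0 = qk k (q 0) (deriv q 0))
    -- each prolonged derivative is Lipschitz in the velocity argument
    (hlip : ∀ k, 2 ≤ k → k ≤ r + 1 →
      ∃ M : ℝ, ∀ v w : Fin n → ℝ, ‖qk k (q 0) v - qk k (q 0) w‖ ≤ M * ‖v - w‖)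
    (vtil : ℝ → (Fin n → ℝ))
    -- the inverse problem: q₁ = q₀ + h ṽ₀ + ∑_{k=2}^{r+1} (h^k/k!) q^{(k)}(q₀, ṽ₀)
    (hinv : ∀ h : ℝ, 0 < h → h ≤ H →
      q h = q 0 + h • vtil h + ∑ k ∈ Finset.Icc 2 (r + 1),
        ((h ^ k / (k.factorial : ℝ)) • qk k (q 0) (vtil h))) :
    ∃ C > 0, ∃ h₀ > 0, ∀ h : ℝ, 0 < h → h < h₀ →
      ‖vtil h - deriv q 0‖ ≤ C * h ^ (r + 1) := by
  set g := fun k ↦ qk k (q 0)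
  obtain ⟨K, hK⟩ : ∃ K, ∀ k ∈ Icc 2 (r + 1), LipschitzWith K (g k) :=
    exists_lipschitzWith_of_finset _ fun k hk ↦
      let ⟨M, hM⟩ := hlip k (mem_Icc.1 hk).1 (mem_Icc.1 hk).2
      ⟨_, .of_dist_le' fun v w ↦ by simpa only [dist_eq_norm] using hM v w⟩
  obtain ⟨C, hC⟩ := exists_norm_sub_sum_iteratedDeriv_le (m := r + 1) hq hH
  refine ⟨2 * max C 1, by positivity, min (min H 1) (1 / (2 * (r * K + 1))), by positivity,
    fun h h0 hh₀ ↦ ?_⟩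
  obtain ⟨⟨hhH, hh1⟩, hhK⟩ := by simpa only [lt_min_iff] using hh₀
  have hsmall : r * K * h ≤ 1 / 2 := by
    rw [lt_div_iff₀ (by positivity)] at hhK
    nlinarith
  have hdefect : ‖taylorIncrement g r h (vtil h) - taylorIncrement g r h (deriv q 0)‖
      ≤ C * h ^ (r + 2) := by
    have := hC h ⟨h0.le, hhH.le⟩
    rwa [sub_zero, sum_range_iteratedDeriv_eq_add_taylorIncrement
      (fun k hk ↦ hprol k (mem_Icc.1 hk).1 (by have := (mem_Icc.1 hk).2; omega)),
      hinv h h0 hhH.le, add_assoc, add_sub_add_left_eq_sub] at this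
  have hstab := mul_norm_sub_le_two_mul_norm_taylorIncrement_sub hK h0.le hh1.le hsmall
    (vtil h) (deriv q 0)
  refine le_of_mul_le_mul_left ?_ h0
  calc h * ‖vtil h - deriv q 0‖ ≤ 2 * (C * h ^ (r + 2)) := by linarith
    _ ≤ h * (2 * max C 1 * h ^ (r + 1)) := by
      have := mul_le_mul_of_nonneg_right (le_max_left C 1) (mul_pos h0 (pow_pos h0 (r + 1))).le
      rw [pow_succ]; linarith

/-- Velocity approximation lemma for the Taylor variational integrator inverse problem:
the approximate initial velocity `vtil h` solving the degree-(r+1) Taylor inverse problem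
approximates the exact initial velocity `deriv q 0` to order `h^(r+1)`. -/
theorem velocity_approximation {n r : ℕ}
    (f : (Fin n → ℝ) → (Fin n → ℝ) → ℝ → (Fin n → ℝ))
    (qk : ℕ → (Fin n → ℝ) → (Fin n → ℝ) → (Fin n → ℝ))
    (H : ℝ) (hH : 0 < H)
    (q : ℝ → (Fin n → ℝ)) (hq : ContDiff ℝ (r + 2 : ℕ) q)
    -- q solves the second-order ODE q'' = f(q, q', t) on [0, H]
    (hode : ∀ t ∈ Set.Icc (0 : ℝ) H, deriv (deriv q) t = f (q t) (deriv q t) t)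
    -- qk k gives the k-th time derivative obtained by prolonging the vector field;
    -- it is consistent with the exact solution at the exact initial data (q 0, q' 0)
    (hprol : ∀ k, 2 ≤ k → k ≤ r + 2 → iteratedDeriv k q 0 = qk k (q 0) (deriv q 0))
    -- each prolonged derivative is Lipschitz in the velocity argument
    (hlip : ∀ k, 2 ≤ k → k ≤ r + 1 →
      ∃ M : ℝ, ∀ v w : Fin n → ℝ, ‖qk k (q 0) v - qk k (q 0) w‖ ≤ M * ‖v - w‖)
    (vtil : ℝ → (Fin n → ℝ))
    -- the inverse problem: q₁ = q₀ + h ṽ₀ + ∑_{k=2}^{r+1} (h^k/k!) q^{(k)}(q₀, ṽ₀)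
    (hinv : ∀ h : ℝ, 0 < h → h ≤ H →
      q h = q 0 + h • vtil h + ∑ k ∈ Finset.Icc 2 (r + 1),
        ((h ^ k / (k.factorial : ℝ)) • qk k (q 0) (vtil h))) :
    ∃ C > 0, ∃ h₀ > 0, ∀ h : ℝ, 0 < h → h < h₀ →
      ‖vtil h - deriv q 0‖ ≤ C * h ^ (r + 1) :=
  velocity_approximation_general qk H hH q hq hprol hlip vtil hinv
end

section
/- Let L : ℝ^n × ℝ^n → ℝ be Lipschitz continuous in both variables, and let the exact discrete Lagrangian be L_d^E(q₀,q₁;h) = ∫₀^h L(q₀₁(t), q̇₀₁(t)) dt along the Euler–Lagrange boundary-value solution. Suppose (q_d(t), v_d(t)) approximates (q₀₁(t), q̇₀₁(t)) with error O(h^{r+1}) at the quadrature nodes c_i·h, and the quadrature rule with nodes c_i and weights b_i has order s, i.e. ∫₀^h g(t)dt = h·Σᵢ bᵢ·g(cᵢh) + O(h^{s+1}) for sufficiently smooth g. Then the discrete Lagrangian L_d(q₀,q₁;h) = h·Σᵢ bᵢ·L(q_d(cᵢh), v_d(cᵢh)) satisfies L_d(q₀,q₁;h) = L_d^E(q₀,q₁;h)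 + O(h^{min(r+1,s)+1}). -/
/-!
The discrete Lagrangian differs from the exact one by the quadrature error of the exact
integrand, which is `O(h^(s+1))`, plus `h` times a weighted sum of Lipschitz perturbations of
`L` at the nodes, which is `h · O(h^(r+1))`. For `h ≤ 1` both are `O(h^(min (r+1) s + 1))`.
-/

open Finset

lemma le_abs_mul_pow_of_le_mul_pow {x C h : ℝ} {k p : ℕ} (hx : x ≤ C * h ^ p)
    (h0 : 0 ≤ h) (h1 : h ≤ 1) (hkp : k ≤ p) : x ≤ |C| * h ^ k :=
  calc x ≤ C * h ^ p := hx
    _ ≤ |C| * h ^ p := mul_le_mul_of_nonneg_right (le_abs_self C) (by positivity)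
    _ ≤ |C| * h ^ k := mul_le_mul_of_nonneg_left (pow_le_pow_of_le_one h0 h1 hkp) (abs_nonneg C)

lemma abs_sum_mul_sub_sum_mul_le {ι : Type*} (t : Finset ι) (b x y : ι → ℝ) {ε : ℝ}
    (hxy : ∀ i ∈ t, |x i - y i| ≤ ε) :
    |∑ i ∈ t, b i * x i - ∑ i ∈ t, b i * y i| ≤ (∑ i ∈ t, |b i|) * ε :=
  calc |∑ i ∈ t, b i * x i - ∑ i ∈ t, b i * y i| = |∑ i ∈ t, b i * (x i - y i)| := by
        simp only [mul_sub, sum_sub_distrib]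
    _ ≤ ∑ i ∈ t, |b i| * |x i - y i| := by
        simpa only [abs_mul] using abs_sum_le_sum_abs (fun i ↦ b i * (x i - y i)) t
    _ ≤ ∑ i ∈ t, |b i| * ε :=
        sum_le_sum fun i hi ↦ mul_le_mul_of_nonneg_left (hxy i hi) (abs_nonneg _)
    _ = (∑ i ∈ t, |b i|) * ε := (sum_mul ..).symm

lemma abs_sub_le_of_lipschitz_of_norm_sub_le {E : Type*} [SeminormedAddCommGroup E]
    {L : E → E → ℝ} {K : ℝ}
    (hL : ∀ a b a' b' : E, |L a b - L a' b'| ≤ K * (‖a - a'‖ + ‖b - b'‖))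
    {a b a' b' : E} {ε : ℝ} (ha : ‖a - a'‖ ≤ ε) (hb : ‖b - b'‖ ≤ ε) :
    |L a b - L a' b'| ≤ 2 * |K| * ε :=
  calc |L a b - L a' b'| ≤ K * (‖a - a'‖ + ‖b - b'‖) := hL a b a' b'
    _ ≤ |K| * (‖a - a'‖ + ‖b - b'‖) :=
        mul_le_mul_of_nonneg_right (le_abs_self K) (by positivity)
    _ ≤ |K| * (ε + ε) := mul_le_mul_of_nonneg_left (add_le_add ha hb) (abs_nonneg K)
    _ = 2 * |K| * ε := by ring

/-- Order of accuracy of the Taylor discrete Lagrangian: with an O(h^(r+1))-accurate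
approximation of the Euler–Lagrange boundary-value solution at the quadrature nodes and
an order-s quadrature rule, the discrete Lagrangian approximates the exact discrete
Lagrangian to order `min (r+1) s`. -/
theorem discrete_lagrangian_order {E : Type*} [NormedAddCommGroup E] [NormedSpace ℝ E]
    (r s m : ℕ) (K : ℝ)
    (L : E → E → ℝ)
    -- L is Lipschitz continuous in both variables
    (hL : ∀ a b a' b' : E, |L a b - L a' b'| ≤ K * (‖a - a'‖ + ‖b - b'‖))
    (b c : Fin m → ℝ)
    (q v : ℝ → E)        -- exact Euler–Lagrange boundary-value solution and its velocity
    (qd vd : ℝ → ℝ → E)  -- numerical approximations (depending on the step size h)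
    (H : ℝ) (hH : 0 < H)
    -- the quadrature rule has order s for the exact integrand
    (Cq : ℝ) (hquad : ∀ h : ℝ, 0 < h → h ≤ H →
      |(∫ t in (0 : ℝ)..h, L (q t) (v t)) -
        h * ∑ i, b i * L (q (c i * h)) (v (c i * h))| ≤ Cq * h ^ (s + 1))
    -- nodal errors of order O(h^(r+1))
    (Ce : ℝ) (hnode : ∀ h : ℝ, 0 < h → h ≤ H → ∀ i : Fin m,
      ‖qd h (c i * h) - q (c i * h)‖ ≤ Ce * h ^ (r + 1) ∧
      ‖vd h (c i * h) - v (c i * h)‖ ≤ Ce * h ^ (r + 1)) :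
    ∃ C > 0, ∃ h₀ > 0, ∀ h : ℝ, 0 < h → h < h₀ →
      |(h * ∑ i, b i * L (qd h (c i * h)) (vd h (c i * h))) -
        ∫ t in (0 : ℝ)..h, L (q t) (v t)| ≤ C * h ^ (min (r + 1) s + 1) := by
  set Cd := (∑ i, |b i|) * (2 * |K| * Ce)
  refine ⟨|Cq| + |Cd| + 1, by positivity, min H 1, lt_min hH one_pos, fun h hh hlt ↦ ?_⟩
  have hH' : h ≤ H := (hlt.trans_le (min_le_left _ _)).le
  have h1 : h ≤ 1 := (hlt.trans_le (min_le_right _ _)).le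
  have hquad_err := le_abs_mul_pow_of_le_mul_pow (hquad h hh hH') hh.le h1
    (k := min (r + 1) s + 1) (by omega)
  have hnode_err : |h * ∑ i, b i * L (qd h (c i * h)) (vd h (c i * h)) -
      h * ∑ i, b i * L (q (c i * h)) (v (c i * h))| ≤ |Cd| * h ^ (min (r + 1) s + 1) := by
    refine le_abs_mul_pow_of_le_mul_pow ?_ hh.le h1 (p := r + 1 + 1) (by omega)
    have hsum := abs_sum_mul_sub_sum_mul_le univ b _ _ fun i _ ↦
      abs_sub_le_of_lipschitz_of_norm_sub_le hL (hnode h hh hH' i).1 (hnode h hh hH' i).2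
    rw [← mul_sub, abs_mul, abs_of_pos hh]
    calc h * |_| ≤ h * (Cd * h ^ (r + 1)) := by
          refine mul_le_mul_of_nonneg_left (hsum.trans_eq ?_) hh.le
          ring
      _ = Cd * h ^ (r + 1 + 1) := by ring
  calc _ ≤ _ + _ := abs_sub_le _ (h * ∑ i, b i * L (q (c i * h)) (v (c i * h))) _
    _ ≤ _ := by rw [abs_sub_comm] at hquad_err; nlinarith [pow_pos hh (min (r + 1) s + 1)]
end

section
/- Let {(bᵢ,cᵢ)}_{i=1}^m be a symmetric quadrature rule on [0,1], i.e. cᵢ = 1 − c_{m−i+1} and bᵢ = b_{m−i+1} for all i. Define nodal approximations q_{cᵢ} and v_{cᵢ} by blending forward Taylor steps from (q₀,ṽ₀) and backward Taylor steps from (q₁,ṽ₁), where ṽ₀ and ṽ₁ solve q₁ = Ψ_h^{(r)}(q₀,ṽ₀) and q₀ = Ψ_{−h}^{(r)}(q₁,ṽ₁). Then the resulting discrete Lagrangian L_d(q₀,q₁;h) = h·Σᵢ bᵢ·L(q_{cᵢ}, v_{cᵢ}) is self-adjoint: L_d(q₀,q₁;h) = −L_d(q₁,q₀;−h). In particular,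 the exchange (q₀,q₁,h) ↦ (q₁,q₀,−h) sends ṽ₀ ↦ ṽ₁, ṽ₁ ↦ ṽ₀, q_{cᵢ} ↦ q_{c_{m−i+1}}, and v_{cᵢ} ↦ v_{c_{m−i+1}}. -/
/-!
Exchanging `(q₀, q₁, h)` with `(q₁, q₀, -h)` turns the forward inverse problem into the backward
one, so by uniqueness of their solutions `ṽ₀` and `ṽ₁` trade places. The blend of a forward and a
backward curve is then invariant under `c ↦ 1 - c` together with `h ↦ -h` and the swap of the two
curves, which by symmetry of the nodes is the index reversal `i ↦ m - i + 1`. Reindexing the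
quadrature sum by this reversal leaves it unchanged since the weights are symmetric, and the
prefactor `h` changes sign.
-/

def blend {R E : Type*} [CommRing R] [AddCommGroup E] [Module R E] (f g : R → E) (c h : R) : E :=
  c • f (c * h) + (1 - c) • g (-(1 - c) * h)

theorem blend_swap_neg {R E : Type*} [CommRing R] [AddCommGroup E] [Module R E]
    (f g : R → E) (c h : R) : blend g f c (-h) = blend f g (1 - c) h := by
  unfold blend
  rw [add_comm]
  congr 3 <;> ring

theorem Fin.sum_mul_comp_rev_of_symmetric {R : Type*} [NonUnitalNonAssocSemiring R] {m : ℕ}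
    {b : Fin m → R} (hb : ∀ i, b i = b i.rev) (g : Fin m → R) :
    ∑ i : Fin m, b i * g i.rev = ∑ i, b i * g i := by
  calc ∑ i : Fin m, b i * g i.rev = ∑ i : Fin m, b i.rev * g i.rev := by simp only [← hb]
    _ = ∑ i, b i * g i := Equiv.sum_comp Fin.revPerm fun i => b i * g i

/-- Self-adjointness of the symmetric Taylor discrete Lagrangian: with a symmetric
quadrature rule and nodal values blended from forward and backward Taylor steps, the
discrete Lagrangian satisfies `L_d(q₀,q₁;h) = -L_d(q₁,q₀;-h)`; moreover the exchange
`(q₀,q₁,h) ↦ (q₁,q₀,-h)` sends `ṽ₀ ↦ ṽ₁`, `ṽ₁ ↦ ṽ₀`, `q_{cᵢ} ↦ q_{c_{m-i+1}}` and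
`v_{cᵢ} ↦ v_{c_{m-i+1}}` (index reversal is `Fin.rev`). -/
theorem symmetric_taylor_Ld_self_adjoint {E : Type*} [NormedAddCommGroup E]
    [NormedSpace ℝ E]
    (r m : ℕ)
    (Ψ : ℕ → ℝ → E → E → E × E)   -- Ψ k h q v : the k-th order Taylor one-step method
    (L : E → E → ℝ)
    (b c : Fin m → ℝ)
    -- symmetric quadrature rule: cᵢ = 1 - c_{m-i+1}, bᵢ = b_{m-i+1}
    (hc : ∀ i : Fin m, c i = 1 - c i.rev)
    (hb : ∀ i : Fin m, b i = b i.rev)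
    (v0 v1 : E → E → ℝ → E)
    -- the inverse problems q₁ = Ψ_h^{(r)}(q₀,ṽ₀), q₀ = Ψ_{-h}^{(r)}(q₁,ṽ₁)
    (hv0 : ∀ q₀ q₁ h, q₁ = (Ψ r h q₀ (v0 q₀ q₁ h)).1)
    (hv1 : ∀ q₀ q₁ h, q₀ = (Ψ r (-h) q₁ (v1 q₀ q₁ h)).1)
    -- the inverse problems have unique solutions
    (huniq : ∀ (h : ℝ) (x v w : E), (Ψ r h x v).1 = (Ψ r h x w).1 → v = w)
    (qc vc : E → E → ℝ → Fin m → E)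
    -- blended nodal values
    (hqc : ∀ q₀ q₁ h i, qc q₀ q₁ h i =
      c i • (Ψ r (c i * h) q₀ (v0 q₀ q₁ h)).1 +
      (1 - c i) • (Ψ r (-(1 - c i) * h) q₁ (v1 q₀ q₁ h)).1)
    (hvc : ∀ q₀ q₁ h i, vc q₀ q₁ h i =
      c i • (Ψ (r - 1) (c i * h) q₀ (v0 q₀ q₁ h)).1 +
      (1 - c i) • (Ψ (r - 1) (-(1 - c i) * h) q₁ (v1 q₀ q₁ h)).1)
    (Ld : E → E → ℝ → ℝ)
    (hLd : ∀ q₀ q₁ h, Ld q₀ q₁ h = h * ∑ i, b i * L (qc q₀ q₁ h i) (vc q₀ q₁ h i)) :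
    ∀ (q₀ q₁ : E) (h : ℝ),
      Ld q₀ q₁ h = -Ld q₁ q₀ (-h) ∧
      v0 q₁ q₀ (-h) = v1 q₀ q₁ h ∧
      v1 q₁ q₀ (-h) = v0 q₀ q₁ h ∧
      (∀ i : Fin m, qc q₁ q₀ (-h) i = qc q₀ q₁ h i.rev) ∧
      (∀ i : Fin m, vc q₁ q₀ (-h) i = vc q₀ q₁ h i.rev) := by
  intro q₀ q₁ h
  have hv01 : v0 q₁ q₀ (-h) = v1 q₀ q₁ h :=
    huniq (-h) q₁ _ _ ((hv0 q₁ q₀ (-h)).symm.trans (hv1 q₀ q₁ h))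
  have hv10 : v1 q₁ q₀ (-h) = v0 q₀ q₁ h :=
    huniq h q₀ _ _ (by simpa only [neg_neg] using (hv1 q₁ q₀ (-h)).symm.trans (hv0 q₀ q₁ h))
  have hcrev (i : Fin m) : c i.rev = 1 - c i := by linarith [Fin.rev_rev i ▸ hc i.rev]
  have hqrev (i : Fin m) : qc q₁ q₀ (-h) i = qc q₀ q₁ h i.rev := by
    rw [hqc, hqc, hv01, hv10, hcrev]
    exact blend_swap_neg (fun t => (Ψ r t q₀ (v0 q₀ q₁ h)).1)
      (fun t => (Ψ r t q₁ (v1 q₀ q₁ h)).1) (c i) h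
  have hvrev (i : Fin m) : vc q₁ q₀ (-h) i = vc q₀ q₁ h i.rev := by
    rw [hvc, hvc, hv01, hv10, hcrev]
    exact blend_swap_neg (fun t => (Ψ (r - 1) t q₀ (v0 q₀ q₁ h)).1)
      (fun t => (Ψ (r - 1) t q₁ (v1 q₀ q₁ h)).1) (c i) h
  refine ⟨?_, hv01, hv10, hqrev, hvrev⟩
  rw [hLd, hLd]
  simp only [hqrev, hvrev]
  rw [Fin.sum_mul_comp_rev_of_symmetric hb fun i => L (qc q₀ q₁ h i) (vc q₀ q₁ h i)]
  ring
end

section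
/- Let Ψ_h be a one-step method of order r+1 for the first-order system on TQ associated to q'' = f(q,q'), meaning its local truncation error after one step from exact data is O(h^{r+2}). Let ṽ₀ solve the inverse problem π_Q ∘ Ψ_h(q₀, ṽ₀) = q₁, where q₁ is the endpoint of the exact boundary-value solution with q(0)=q₀, q'(0)=v₀. Then ‖ṽ₀ − v₀‖ = O(h^{r+1}). -/
/-!
Along the fibre over `q₀`, the position part `u ↦ π_Q Ψ_h(q₀, u)` of the method is `h` times the
identity up to `O(h²)` in the velocity, so for small `h` it expands distances by at least `h / 2`.
The velocities `ṽ₀` and `v₀` are mapped within `Clte h^{r+2}` of each other: the first lands on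
`q₁ = π_Q Φ_h(q₀, v₀)` exactly, the second up to the local truncation error. Hence
`‖ṽ₀ - v₀‖ ≤ 2 Clte h^{r+1}`.
-/

open Set

theorem mul_norm_le_of_norm_sub_smul_le {F : Type*} [NormedAddCommGroup F] [NormedSpace ℝ F]
    {x y : F} {h K ε : ℝ} (hh : 0 ≤ h) (hlin : ‖y - h • x‖ ≤ K * h ^ 2 * ‖x‖)
    (hy : ‖y‖ ≤ ε) : h * ‖x‖ ≤ K * h ^ 2 * ‖x‖ + ε :=
  calc h * ‖x‖ = ‖h • x‖ := by rw [norm_smul, Real.norm_of_nonneg hh]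
    _ ≤ ‖y‖ + ‖y - h • x‖ := norm_le_norm_add_norm_sub y (h • x)
    _ ≤ K * h ^ 2 * ‖x‖ + ε := by linarith

theorem le_two_mul_pow_of_mul_le_mul_sq_add {t h K c : ℝ} (r : ℕ) (ht : 0 ≤ t) (hh : 0 < h)
    (hKh : K * h ≤ 1 / 2) (hineq : h * t ≤ K * h ^ 2 * t + c * h ^ (r + 2)) :
    t ≤ 2 * c * h ^ (r + 1) := by
  have hfactor : K * h ^ 2 * t + c * h ^ (r + 2) = h * (K * h * t + c * h ^ (r + 1)) := by ring
  have hdiv : t ≤ K * h * t + c * h ^ (r + 1) := le_of_mul_le_mul_left (hfactor ▸ hineq) hh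
  nlinarith [mul_le_mul_of_nonneg_right hKh ht]

theorem exists_pos_le_forall_mul_le_half {H : ℝ} (hH : 0 < H) (K : ℝ) :
    ∃ h₀ > 0, h₀ ≤ H ∧ ∀ h, 0 < h → h < h₀ → K * h ≤ 1 / 2 := by
  refine ⟨min H (1 / (2 * (|K| + 1))), by positivity, min_le_left _ _, fun h hh hlt => ?_⟩
  have hsmall : h * (2 * (|K| + 1)) < 1 :=
    (lt_div_iff₀ (by positivity)).1 (hlt.trans_le (min_le_right _ _))
  nlinarith [le_abs_self K]

/-- Generalization of the velocity lemma to an arbitrary one-step method of order r+1: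
if `Ψ` has local truncation error O(h^{r+2}) relative to the exact flow `Φ`, and `ṽ₀`
solves the inverse problem `π_Q ∘ Ψ_h(q₀,ṽ₀) = q₁` with `q₁` the endpoint of the exact
boundary-value solution, then `‖ṽ₀ - v₀‖ = O(h^{r+1})`. -/
theorem one_step_velocity_estimate {E : Type*} [NormedAddCommGroup E]
    [NormedSpace ℝ E]
    (r : ℕ) (H : ℝ) (hH : 0 < H)
    (Φ Ψ : ℝ → E × E → E × E)   -- exact flow on TQ and the one-step method
    (q₀ v₀ : E)
    -- Ψ is a method of order r+1: local truncation error O(h^{r+2})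
    (Clte : ℝ) (hlte : ∀ h ∈ Set.Icc (0 : ℝ) H, ∀ x : E × E,
      ‖Ψ h x - Φ h x‖ ≤ Clte * h ^ (r + 2))
    -- one-step regularity of the method in the velocity argument
    (K : ℝ) (hΨlip : ∀ h ∈ Set.Icc (0 : ℝ) H, ∀ u w : E,
      ‖(Ψ h (q₀, u)).1 - (Ψ h (q₀, w)).1 - h • (u - w)‖ ≤ K * h ^ 2 * ‖u - w‖)
    (vt : ℝ → E)
    -- the inverse problem: π_Q ∘ Ψ_h(q₀, ṽ₀) = q₁ = π_Q ∘ Φ_h(q₀, v₀)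
    (hinv : ∀ h ∈ Set.Icc (0 : ℝ) H, (Ψ h (q₀, vt h)).1 = (Φ h (q₀, v₀)).1) :
    ∃ C > 0, ∃ h₀ > 0, ∀ h : ℝ, 0 < h → h < h₀ →
      ‖vt h - v₀‖ ≤ C * h ^ (r + 1) := by
  obtain ⟨h₀, h₀_pos, h₀_le, hsmall⟩ := exists_pos_le_forall_mul_le_half hH K
  refine ⟨2 * |Clte| + 1, by positivity, h₀, h₀_pos, fun h hh hlt => ?_⟩
  have hmem : h ∈ Icc 0 H := ⟨hh.le, hlt.le.trans h₀_le⟩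
  have hdefect : ‖(Ψ h (q₀, vt h)).1 - (Ψ h (q₀, v₀)).1‖ ≤ Clte * h ^ (r + 2) := by
    rw [hinv h hmem, norm_sub_rev]
    exact (norm_fst_le _).trans (hlte h hmem (q₀, v₀))
  calc ‖vt h - v₀‖ ≤ 2 * Clte * h ^ (r + 1) :=
        le_two_mul_pow_of_mul_le_mul_sq_add r (norm_nonneg _) hh (hsmall h hh hlt)
          (mul_norm_le_of_norm_sub_smul_le hh.le (hΨlip h hmem _ _) hdefect)
    _ ≤ (2 * |Clte| + 1) * h ^ (r + 1) := by gcongr; linarith [le_abs_self Clte]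
end

section
/- Let L_d : ℝ^n × ℝ^n × ℝ → ℝ be a self-adjoint discrete Lagrangian, i.e. L_d(q₀,q₁;h) = −L_d(q₁,q₀;−h), and assume the discrete Legendre transforms p₀ = −D₁L_d(q₀,q₁;h), p₁ = D₂L_d(q₀,q₁;h) define a one-step map F_h : (q₀,p₀) ↦ (q₁,p₁). Then F_h is a symmetric method: F_{−h} ∘ F_h = id, equivalently F_h⁻¹ = F_{−h}. -/
/-!
Differentiating the self-adjointness identity `L_d(a, b; h) = -L_d(b, a; -h)` in `a` gives
`D₁L_d(a, b; h) = -D₂L_d(b, a; -h)`. Hence if `(q₁, p₁) = F_h(q₀, p₀)`, the pair `(q₀, p₀)` satisfies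
the discrete Legendre equations of step `-h` started at `(q₁, p₁)`, and uniqueness of their
solution forces `F_{-h}(q₁, p₁) = (q₀, p₀)`.
-/

theorem HasGradientAt.neg {𝕜 F : Type*} [RCLike 𝕜] [NormedAddCommGroup F]
    [InnerProductSpace 𝕜 F] [CompleteSpace F] {f : F → 𝕜} {f' x : F}
    (hf : HasGradientAt f f' x) : HasGradientAt (fun y => -f y) (-f') x := by
  rw [hasGradientAt_iff_hasFDerivAt] at hf ⊢
  rw [map_neg]
  exact hf.neg

namespace DiscreteLagrangian

theorem apply_eq_of_legendre {E : Type*} [Neg E] {D1Ld D2Ld : E → E → ℝ → E}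
    {F : ℝ → E × E → E × E}
    (hF : ∀ h q₀ p₀,
      p₀ = -D1Ld q₀ (F h (q₀, p₀)).1 h ∧ (F h (q₀, p₀)).2 = D2Ld q₀ (F h (q₀, p₀)).1 h)
    (huniq : ∀ h q₀ p₀ b b', p₀ = -D1Ld q₀ b h → p₀ = -D1Ld q₀ b' h → b = b')
    {h : ℝ} {q₀ p₀ q₁ p₁ : E} (hp₀ : p₀ = -D1Ld q₀ q₁ h) (hp₁ : p₁ = D2Ld q₀ q₁ h) :
    F h (q₀, p₀) = (q₁, p₁) := by
  obtain ⟨hp₀', hp₁'⟩ := hF h q₀ p₀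
  have hq₁ : (F h (q₀, p₀)).1 = q₁ := huniq h q₀ p₀ _ _ hp₀' hp₀
  exact Prod.ext hq₁ (by rw [hp₁', hq₁, hp₁])

variable {E : Type*} [NormedAddCommGroup E] [InnerProductSpace ℝ E] [CompleteSpace E]
  {Ld : E → E → ℝ → ℝ} {D1Ld D2Ld : E → E → ℝ → E}

theorem D1_eq_neg_D2_swap (hD1 : ∀ a b h, HasGradientAt (fun x => Ld x b h) (D1Ld a b h) a)
    (hD2 : ∀ a b h, HasGradientAt (fun y => Ld a y h) (D2Ld a b h) b)
    (hself : ∀ a b h, Ld a b h = -Ld b a (-h)) (a b : E) (h : ℝ) :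
    D1Ld a b h = -D2Ld b a (-h) :=
  (hD1 a b h).unique <| (hD2 b a (-h)).neg.congr_of_eventuallyEq <|
    Filter.Eventually.of_forall fun x => hself x b h

theorem D2_eq_neg_D1_swap (hD1 : ∀ a b h, HasGradientAt (fun x => Ld x b h) (D1Ld a b h) a)
    (hD2 : ∀ a b h, HasGradientAt (fun y => Ld a y h) (D2Ld a b h) b)
    (hself : ∀ a b h, Ld a b h = -Ld b a (-h)) (a b : E) (h : ℝ) :
    D2Ld a b h = -D1Ld b a (-h) := by
  rw [D1_eq_neg_D2_swap hD1 hD2 hself, neg_neg, neg_neg]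

end DiscreteLagrangian

open DiscreteLagrangian in
/-- Marsden–West Theorem 2.4.1: a self-adjoint discrete Lagrangian generates a symmetric
one-step method, i.e. `F_{-h} ∘ F_h = id`. -/
theorem self_adjoint_Ld_gives_symmetric_method {n : ℕ}
    (Ld : EuclideanSpace ℝ (Fin n) → EuclideanSpace ℝ (Fin n) → ℝ → ℝ)
    (D1Ld D2Ld : EuclideanSpace ℝ (Fin n) → EuclideanSpace ℝ (Fin n) → ℝ →
      EuclideanSpace ℝ (Fin n))
    (hD1 : ∀ a b (h : ℝ), HasGradientAt (fun x => Ld x b h) (D1Ld a b h) a)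
    (hD2 : ∀ a b (h : ℝ), HasGradientAt (fun y => Ld a y h) (D2Ld a b h) b)
    -- self-adjointness: L_d(q₀,q₁;h) = -L_d(q₁,q₀;-h)
    (hself : ∀ a b (h : ℝ), Ld a b h = -Ld b a (-h))
    (F : ℝ → EuclideanSpace ℝ (Fin n) × EuclideanSpace ℝ (Fin n) →
      EuclideanSpace ℝ (Fin n) × EuclideanSpace ℝ (Fin n))
    -- the discrete Legendre transforms define the one-step map F_h : (q₀,p₀) ↦ (q₁,p₁)
    (hF : ∀ (h : ℝ) (q₀ p₀ : EuclideanSpace ℝ (Fin n)),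
      p₀ = -(D1Ld q₀ (F h (q₀, p₀)).1 h) ∧
      (F h (q₀, p₀)).2 = D2Ld q₀ (F h (q₀, p₀)).1 h)
    -- the implicit equation defining q₁ has a unique solution
    (huniq : ∀ (h : ℝ) (q₀ p₀ b b' : EuclideanSpace ℝ (Fin n)),
      p₀ = -(D1Ld q₀ b h) → p₀ = -(D1Ld q₀ b' h) → b = b') :
    ∀ (h : ℝ) (z : EuclideanSpace ℝ (Fin n) × EuclideanSpace ℝ (Fin n)),
      F (-h) (F h z) = z := by
  rintro h ⟨q₀, p₀⟩
  obtain ⟨hp₀, hp₁⟩ := hF h q₀ p₀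
  apply apply_eq_of_legendre hF huniq
  · exact hp₁.trans (D2_eq_neg_D1_swap hD1 hD2 hself _ _ _)
  · exact hp₀.trans (by rw [D1_eq_neg_D2_swap hD1 hD2 hself, neg_neg])
end

section
/- Suppose the discrete Lagrangian L_d(·,·;h) approximates the exact discrete Lagrangian with nodal errors: L_d(q₀,q₁;h) = h·Σᵢ bᵢ·L(q(cᵢh) + O(h^{r+1}), q̇(cᵢh) + O(h^r)) where L is Lipschitz in both arguments, and the quadrature rule has order at least r+1. Then L_d(q₀,q₁;h) = L_d^E(q₀,q₁;h) + O(h^{r+1}). -/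
/-! Split the error into the quadrature error of the exact integrand, `O(h^{r+2})` by assumption,
and the effect of the nodal errors. By the Lipschitz bound the integrand changes by
`O(h^{r+1}) + O(h^r)` at each node, and the factor `h` in front of the quadrature sum turns
this into `O(h^{r+1})`. -/

open Asymptotics Filter Topology

theorem Asymptotics.IsBigO.sub_lipschitz₂ {α E₁ E₂ F : Type*} [SeminormedAddCommGroup E₁]
    [SeminormedAddCommGroup E₂] [Norm F] {l : Filter α} {L : E₁ → E₂ → ℝ} {K : ℝ}
    (hL : ∀ a b a' b', |L a b - L a' b'| ≤ K * (‖a - a'‖ + ‖b - b'‖))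
    {x x' : α → E₁} {y y' : α → E₂} {g : α → F}
    (hx : (fun t => x t - x' t) =O[l] g) (hy : (fun t => y t - y' t) =O[l] g) :
    (fun t => L (x t) (y t) - L (x' t) (y' t)) =O[l] g := by
  have hLip : (fun t => L (x t) (y t) - L (x' t) (y' t)) =O[l]
      (fun t => ‖x t - x' t‖ + ‖y t - y' t‖) :=
    .of_bound K <| .of_forall fun t => by
      rw [Real.norm_eq_abs, Real.norm_of_nonneg (by positivity)]
      exact hL _ _ _ _
  exact hLip.trans (hx.norm_left.add hy.norm_left)

theorem Asymptotics.IsBigO.mul_weightedSum_sub {ι : Type*} [Fintype ι] {r : ℕ} {l : Filter ℝ}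
    (b : ι → ℝ) {f g : ℝ → ι → ℝ} (hfg : ∀ i, (fun h => f h i - g h i) =O[l] (· ^ r)) :
    (fun h => h * ∑ i, b i * f h i - h * ∑ i, b i * g h i) =O[l] (· ^ (r + 1)) := by
  have hsum : (fun h => ∑ i, b i * (f h i - g h i)) =O[l] (· ^ r) :=
    .fun_sum fun i _ => (hfg i).const_mul_left (b i)
  refine ((isBigO_refl id l).mul hsum).congr (fun h => ?_) (fun h => ?_)
  · simp only [id, mul_sub, Finset.mul_sum, Finset.sum_sub_distrib]
  · exact (pow_succ' h r).symm

theorem isBigO_nhdsGT_zero_pow_of_bound {F : Type*} [Norm F] {f : ℝ → F} {H C : ℝ} (n : ℕ)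
    (hH : 0 < H) (hf : ∀ h, 0 < h → h ≤ H → ‖f h‖ ≤ C * h ^ n) :
    f =O[𝓝[>] 0] (· ^ n) :=
  .of_bound C <| eventually_of_mem (Ioc_mem_nhdsGT hH) fun h ⟨h0, hle⟩ => by
    rw [norm_pow, Real.norm_of_nonneg h0.le]
    exact hf h h0 hle

theorem exists_pos_bound_of_isBigO_nhdsGT_zero_pow {f : ℝ → ℝ} {n : ℕ}
    (hf : f =O[𝓝[>] 0] (· ^ n)) :
    ∃ C > 0, ∃ h₀ > 0, ∀ h : ℝ, 0 < h → h < h₀ → |f h| ≤ C * h ^ n := by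
  obtain ⟨C, hC, hbound⟩ := hf.exists_pos
  obtain ⟨h₀, hh₀, hsub⟩ := mem_nhdsGT_iff_exists_Ioo_subset.1 hbound.bound
  refine ⟨C, hC, h₀, hh₀, fun h h0 hlt => ?_⟩
  simpa [Real.norm_eq_abs, abs_of_pos h0] using hsub ⟨h0, hlt⟩

theorem isBigO_nhdsGT_zero_pow_succ (n : ℕ) :
    (fun h : ℝ => h ^ (n + 1)) =O[𝓝[>] 0] (· ^ n) :=
  (isLittleO_pow_pow n.lt_succ_self).isBigO.mono nhdsWithin_le_nhds

/-- Order of the symmetric Taylor discrete Lagrangian: with nodal position errors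
O(h^{r+1}), nodal velocity errors O(h^r), a Lipschitz Lagrangian and a quadrature rule of
order at least r+1, the discrete Lagrangian approximates the exact discrete Lagrangian to
order O(h^{r+1}). -/
theorem symmetric_taylor_Ld_order {E : Type*} [NormedAddCommGroup E] [NormedSpace ℝ E]
    (r m : ℕ) (K : ℝ)
    (L : E → E → ℝ)
    -- L is Lipschitz in both arguments
    (hL : ∀ a b a' b' : E, |L a b - L a' b'| ≤ K * (‖a - a'‖ + ‖b - b'‖))
    (b c : Fin m → ℝ)
    (q : ℝ → E)          -- exact Euler–Lagrange boundary-value solution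
    (qe ve : ℝ → Fin m → E)  -- perturbed nodal values, depending on the step size h
    (H : ℝ) (hH : 0 < H)
    -- the quadrature rule has order at least r+1 for the exact integrand
    (Cq : ℝ) (hquad : ∀ h : ℝ, 0 < h → h ≤ H →
      |(∫ t in (0 : ℝ)..h, L (q t) (deriv q t)) -
        h * ∑ i, b i * L (q (c i * h)) (deriv q (c i * h))| ≤ Cq * h ^ (r + 2))
    -- nodal errors: positions O(h^{r+1}), velocities O(h^r)
    (C1 C2 : ℝ)
    (hqe : ∀ h : ℝ, 0 < h → h ≤ H → ∀ i : Fin m,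
      ‖qe h i - q (c i * h)‖ ≤ C1 * h ^ (r + 1))
    (hve : ∀ h : ℝ, 0 < h → h ≤ H → ∀ i : Fin m,
      ‖ve h i - deriv q (c i * h)‖ ≤ C2 * h ^ r) :
    ∃ C > 0, ∃ h₀ > 0, ∀ h : ℝ, 0 < h → h < h₀ →
      |(h * ∑ i, b i * L (qe h i) (ve h i)) -
        ∫ t in (0 : ℝ)..h, L (q t) (deriv q t)| ≤ C * h ^ (r + 1) := by
  have hquadO := (isBigO_nhdsGT_zero_pow_of_bound (r + 2) hH fun h h0 hle =>
    (Real.norm_eq_abs _).trans_le (hquad h h0 hle)).trans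
    (isBigO_nhdsGT_zero_pow_succ (r + 1))
  have hnodal := IsBigO.mul_weightedSum_sub b fun i =>
    IsBigO.sub_lipschitz₂ hL
      ((isBigO_nhdsGT_zero_pow_of_bound (r + 1) hH fun h h0 hle => hqe h h0 hle i).trans
        (isBigO_nhdsGT_zero_pow_succ r))
      (isBigO_nhdsGT_zero_pow_of_bound r hH fun h h0 hle => hve h h0 hle i)
  exact exists_pos_bound_of_isBigO_nhdsGT_zero_pow <|
    (hnodal.sub hquadO).congr_left fun h => by ring
end

section
/- Let Ψ̃_h : ℝ^{2n} → ℝ^{2n} be the map implicitly defined by p₀ = −D₁L_d(q₀,q₁;h), p₁ = D₂L_d(q₀,q₁;h) for a twice continuously differentiable discrete Lagrangian L_d with D₁D₂L_d invertible (regularity). Then Ψ̃_h is symplectic: its derivative DΨ̃_h satisfies (DΨ̃_h)ᵀ J (DΨ̃_h) = J, where J is the standard symplectic matrix. -/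
/-!
Let `φ(q₀, p₀) = (q₀, q₁)` be the inverse of the left discrete Legendre transform. The defining
relations of `Ψ` say that `L_d` is a generating function: `dL_d(φ w) = p₁ dq₁ - p₀ dq₀`.
Differentiating this identity along `φ` and using the symmetry of the Hessian of `L_d` shows that
the pull-back of `dp₁ ∧ dq₁ - dp₀ ∧ dq₀` vanishes, which is the claim.
-/

open scoped RealInnerProductSpace

section SecondDerivative

variable {F G H : Type*} [NormedAddCommGroup F] [NormedSpace ℝ F] [NormedAddCommGroup G]
  [NormedSpace ℝ G] [NormedAddCommGroup H] [NormedSpace ℝ H]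

theorem ContDiffAt.fderiv_fderiv_comp_apply_comm {f : F → H} {φ : G → F} {z : G}
    (hf : ContDiffAt ℝ 2 f (φ z)) (hφ : DifferentiableAt ℝ φ z) (a b : G) :
    fderiv ℝ (fun w => fderiv ℝ f (φ w) (fderiv ℝ φ z a)) z b =
      fderiv ℝ (fun w => fderiv ℝ f (φ w) (fderiv ℝ φ z b)) z a := by
  have hf' : DifferentiableAt ℝ (fderiv ℝ f) (φ z) :=
    (hf.fderiv_right le_rfl).differentiableAt one_ne_zero
  have chain : ∀ c d, fderiv ℝ (fun w => fderiv ℝ f (φ w) c) z d =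
      fderiv ℝ (fderiv ℝ f) (φ z) (fderiv ℝ φ z d) c := fun c d => by
    have hc : HasFDerivAt (fun w => fderiv ℝ f (φ w)) _ z := hf'.hasFDerivAt.comp z hφ.hasFDerivAt
    rw [(hc.clm_apply (hasFDerivAt_const c z)).fderiv]
    simp
  rw [chain, chain]
  exact hf.isSymmSndFDerivAt (by simp) _ _

end SecondDerivative

section PartialGradients

variable {E E' : Type*} [NormedAddCommGroup E] [InnerProductSpace ℝ E] [CompleteSpace E]
  [NormedAddCommGroup E'] [InnerProductSpace ℝ E'] [CompleteSpace E']

theorem fderiv_uncurry_apply_of_hasGradientAt {L : E → E' → ℝ} {x : E} {y : E'} {g₁ : E}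
    {g₂ : E'} (hL : DifferentiableAt ℝ (fun p : E × E' => L p.1 p.2) (x, y))
    (h₁ : HasGradientAt (fun x => L x y) g₁ x) (h₂ : HasGradientAt (L x) g₂ y) (c : E × E') :
    fderiv ℝ (fun p : E × E' => L p.1 p.2) (x, y) c = ⟪g₁, c.1⟫ + ⟪g₂, c.2⟫ := by
  have h₁' := hL.hasFDerivAt.comp x (hasFDerivAt_prodMk_left (𝕜 := ℝ) x y)
  have h₂' := hL.hasFDerivAt.comp y (hasFDerivAt_prodMk_right (𝕜 := ℝ) x y)
  rw [← InnerProductSpace.toDual_apply_apply, ← InnerProductSpace.toDual_apply_apply,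
    h₁.hasFDerivAt.unique h₁', h₂.hasFDerivAt.unique h₂']
  simp [← map_add]

end PartialGradients

theorem discrete_hamiltonian_map_symplectic_general {n : ℕ}
    (Ld : EuclideanSpace ℝ (Fin n) → EuclideanSpace ℝ (Fin n) → ℝ)
    (hLd : ContDiff ℝ 2
      (fun z : EuclideanSpace ℝ (Fin n) × EuclideanSpace ℝ (Fin n) => Ld z.1 z.2))
    (Ψ : EuclideanSpace ℝ (Fin n) × EuclideanSpace ℝ (Fin n) →
      EuclideanSpace ℝ (Fin n) × EuclideanSpace ℝ (Fin n))
    (hΨ : Differentiable ℝ Ψ)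
    -- Ψ is implicitly defined by p₀ = -D₁L_d(q₀,q₁), p₁ = D₂L_d(q₀,q₁)
    (hmap : ∀ q₀ p₀ : EuclideanSpace ℝ (Fin n),
      HasGradientAt (fun x => Ld x (Ψ (q₀, p₀)).1) (-p₀) q₀ ∧
      HasGradientAt (fun y => Ld q₀ y) ((Ψ (q₀, p₀)).2) (Ψ (q₀, p₀)).1) :
    ∀ z u v : EuclideanSpace ℝ (Fin n) × EuclideanSpace ℝ (Fin n),
      ⟪(fderiv ℝ Ψ z u).1, (fderiv ℝ Ψ z v).2⟫ - ⟪(fderiv ℝ Ψ z u).2, (fderiv ℝ Ψ z v).1⟫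
        = ⟪u.1, v.2⟫ - ⟪u.2, v.1⟫ := by
  intro z u v
  set φ := fun w : EuclideanSpace ℝ (Fin n) × EuclideanSpace ℝ (Fin n) => (w.1, (Ψ w).1)
  have generating : ∀ w c,
      fderiv ℝ (fun p => Ld p.1 p.2) (φ w) c = ⟪(Ψ w).2, c.2⟫ - ⟪w.2, c.1⟫ := fun w c => by
    rw [fderiv_uncurry_apply_of_hasGradientAt (hLd.differentiable two_ne_zero _)
      (hmap w.1 w.2).1 (hmap w.1 w.2).2, inner_neg_left]
    ring
  have hφ : ∀ a, fderiv ℝ φ z a = (a.1, (fderiv ℝ Ψ z a).1) := fun a => by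
    have h : HasFDerivAt φ _ z := hasFDerivAt_fst.prodMk (hasFDerivAt_fst.comp z (hΨ z).hasFDerivAt)
    rw [h.fderiv]
    rfl
  have hderiv : ∀ c₁ c₂ b, fderiv ℝ (fun w => ⟪(Ψ w).2, c₂⟫ - ⟪w.2, c₁⟫) z b =
      ⟪(fderiv ℝ Ψ z b).2, c₂⟫ - ⟪b.2, c₁⟫ := fun c₁ c₂ b => by
    have h : HasFDerivAt (fun w => ⟪(Ψ w).2, c₂⟫ - ⟪w.2, c₁⟫) _ z :=
      ((hasFDerivAt_snd.comp z (hΨ z).hasFDerivAt).inner ℝ (hasFDerivAt_const c₂ z)).sub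
        (hasFDerivAt_snd.inner ℝ (hasFDerivAt_const c₁ z))
    rw [h.fderiv]
    simp
  have closed := hLd.contDiffAt.fderiv_fderiv_comp_apply_comm (φ := φ)
    (differentiableAt_fst.prodMk (differentiableAt_fst.comp z (hΨ z))) u v
  simp only [generating, hφ, hderiv] at closed
  linarith [real_inner_comm (fderiv ℝ Ψ z u).1 (fderiv ℝ Ψ z v).2, real_inner_comm u.1 v.2]

/-- The discrete Hamiltonian map generated by a C², regular discrete Lagrangian via the
discrete Legendre transforms is symplectic: its derivative preserves the canonical
symplectic form ω((a₁,a₂),(b₁,b₂)) = ⟪a₁,b₂⟫ - ⟪a₂,b₁⟫. -/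
theorem discrete_hamiltonian_map_symplectic {n : ℕ}
    (Ld : EuclideanSpace ℝ (Fin n) → EuclideanSpace ℝ (Fin n) → ℝ)
    (hLd : ContDiff ℝ 2
      (fun z : EuclideanSpace ℝ (Fin n) × EuclideanSpace ℝ (Fin n) => Ld z.1 z.2))
    -- regularity: the mixed second derivative D₁D₂L_d is invertible
    (hreg : ∀ a b : EuclideanSpace ℝ (Fin n),
      Function.Bijective (fun u : EuclideanSpace ℝ (Fin n) =>
        fderiv ℝ (fun x => gradient (fun y => Ld x y) b) a u))
    (Ψ : EuclideanSpace ℝ (Fin n) × EuclideanSpace ℝ (Fin n) →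
      EuclideanSpace ℝ (Fin n) × EuclideanSpace ℝ (Fin n))
    (hΨ : Differentiable ℝ Ψ)
    -- Ψ is implicitly defined by p₀ = -D₁L_d(q₀,q₁), p₁ = D₂L_d(q₀,q₁)
    (hmap : ∀ q₀ p₀ : EuclideanSpace ℝ (Fin n),
      HasGradientAt (fun x => Ld x (Ψ (q₀, p₀)).1) (-p₀) q₀ ∧
      HasGradientAt (fun y => Ld q₀ y) ((Ψ (q₀, p₀)).2) (Ψ (q₀, p₀)).1) :
    ∀ z u v : EuclideanSpace ℝ (Fin n) × EuclideanSpace ℝ (Fin n),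
      ⟪(fderiv ℝ Ψ z u).1, (fderiv ℝ Ψ z v).2⟫ - ⟪(fderiv ℝ Ψ z u).2, (fderiv ℝ Ψ z v).1⟫
        = ⟪u.1, v.2⟫ - ⟪u.2, v.1⟫ :=
  discrete_hamiltonian_map_symplectic_general Ld hLd Ψ hΨ hmap
end
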